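/- Let (W,S) be a Coxeter system with automorphism σ preserving S. Suppose J ⊂ S with W_J finite, x ∈ {}^J W^{σ(J)} with x σ(J) x⁻¹ = J (as sets of reflections, i.e., x·σ(J) = J under conjugation preserving simple reflections of W_J), and u ∈ W_J. Let O_x be the σ-conjugacy class of x. Then O_x ⪯_σ ux, i.e., some minimal length element of O_x is ≤ ux in Bruhat order; in fact x itself is of minimal length in O_x and x ≤ ux. -/

import Mathlib

/-- Bruhat order on a Coxeter group (subword property). -/
def CoxeterSystem.bruhatLE {B W : Type*} [Group W] {M : CoxeterMatrix B}
    (cs : CoxeterSystem M W) (x w : W) : Prop :=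
  ∃ ω : List B, cs.wordProd ω = w ∧ cs.IsReduced ω ∧
    ∃ ω' : List B, ω'.Sublist ω ∧ cs.wordProd ω' = x

/-- The σ-twisted power `x σ(x) σ²(x) ⋯ σ^{n−1}(x)`. -/
def twPow {W : Type*} [Group W] (σ : MulAut W) (x : W) : ℕ → W
  | 0 => 1
  | n + 1 => twPow σ x n * (σ ^ n) x

/-! Twisted powers of a σ-conjugate `g x σ(g)⁻¹` are conjugate to those of `x` up to the factors
`g` and `σⁿ(g)`, so `n ℓ(x) = ℓ(x σ(x) ⋯ σⁿ⁻¹(x)) ≤ 2 ℓ(g) + n ℓ(y)` for every `σ`-conjugate `y`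
of a `σ`-straight `x`; letting `n` grow gives `ℓ(x) ≤ ℓ(y)`. Concatenating reduced words of `u`
and `x` gives a reduced word of `ux` containing one of `x` as a subword, so `x ≤ ux`. -/

theorem twPow_conj {W : Type*} [Group W] (σ : MulAut W) (x g : W) (n : ℕ) :
    twPow σ (g * x * (σ g)⁻¹) n = g * twPow σ x n * ((σ ^ n) g)⁻¹ := by
  induction n with
  | zero => simp [twPow]
  | succ n ih =>
    have hσ_succ : (σ ^ n) (σ g) = (σ ^ (n + 1)) g := by rw [pow_succ, MulAut.mul_apply]
    simp only [twPow, ih, map_mul, map_inv, hσ_succ]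
    group

namespace CoxeterSystem

variable {B W : Type*} [Group W] {M : CoxeterMatrix B} (cs : CoxeterSystem M W)

theorem length_map_le_of_map_simple {B' W' : Type*} [Group W'] {M' : CoxeterMatrix B'}
    (cs' : CoxeterSystem M' W') (f : W →* W') (hf : ∀ i, ∃ j, f (cs.simple i) = cs'.simple j)
    (w : W) : cs'.length (f w) ≤ cs.length w := by
  choose g hg using hf
  obtain ⟨ω, hω, rfl⟩ := cs.exists_isReduced w
  have hmap : f (cs.wordProd ω) = cs'.wordProd (ω.map g) := by
    simp only [wordProd, map_list_prod, List.map_map]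
    congr 1
    exact List.map_congr_left fun i _ ↦ hg i
  calc cs'.length (f (cs.wordProd ω)) ≤ (ω.map g).length := hmap ▸ cs'.length_wordProd_le _
    _ = cs.length (cs.wordProd ω) := by rw [List.length_map, hω.eq]

variable {cs} {σ : MulAut W} (hσ : ∀ i, ∃ j, σ (cs.simple i) = cs.simple j)
include hσ

theorem length_pow_apply_le (n : ℕ) (w : W) : cs.length ((σ ^ n) w) ≤ cs.length w := by
  induction n generalizing w with
  | zero => simp
  | succ n ih =>
    rw [pow_succ, MulAut.mul_apply]
    exact (ih (σ w)).trans (cs.length_map_le_of_map_simple cs σ.toMonoidHom hσ w)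

theorem length_twPow_le (y : W) (n : ℕ) : cs.length (twPow σ y n) ≤ n * cs.length y := by
  induction n with
  | zero => simp [twPow]
  | succ n ih =>
    calc cs.length (twPow σ y n * (σ ^ n) y)
        ≤ cs.length (twPow σ y n) + cs.length ((σ ^ n) y) := cs.length_mul_le _ _
      _ ≤ n * cs.length y + cs.length y := add_le_add ih (length_pow_apply_le hσ n y)
      _ = (n + 1) * cs.length y := by ring

theorem length_twPow_le_of_conj (x g : W) (n : ℕ) :
    cs.length (twPow σ x n) ≤ 2 * cs.length g + n * cs.length (g * x * (σ g)⁻¹) := by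
  have hx : twPow σ x n = g⁻¹ * twPow σ (g * x * (σ g)⁻¹) n * (σ ^ n) g := by
    rw [twPow_conj]; group
  calc cs.length (twPow σ x n)
      ≤ cs.length g⁻¹ + cs.length (twPow σ (g * x * (σ g)⁻¹) n) + cs.length ((σ ^ n) g) := by
        rw [hx]
        exact (cs.length_mul_le _ _).trans (Nat.add_le_add_right (cs.length_mul_le _ _) _)
    _ ≤ cs.length g + n * cs.length (g * x * (σ g)⁻¹) + cs.length g := by
        rw [cs.length_inv]
        gcongr
        exacts [length_twPow_le hσ _ n, length_pow_apply_le hσ n g]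
    _ = 2 * cs.length g + n * cs.length (g * x * (σ g)⁻¹) := by ring

theorem length_le_length_conj_of_straight {x : W}
    (hstraight : ∀ n : ℕ, cs.length (twPow σ x n) = n * cs.length x) (g : W) :
    cs.length x ≤ cs.length (g * x * (σ g)⁻¹) := by
  by_contra! hlt
  have hbound := length_twPow_le_of_conj hσ x g (2 * cs.length g + 1)
  rw [hstraight] at hbound
  nlinarith

end CoxeterSystem

theorem CoxeterSystem.bruhatLE_mul_left_of_length_add {B W : Type*} [Group W]
    {M : CoxeterMatrix B} (cs : CoxeterSystem M W) {u x : W}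
    (hlen : cs.length (u * x) = cs.length u + cs.length x) : cs.bruhatLE x (u * x) := by
  obtain ⟨ωu, hωu, rfl⟩ := cs.exists_isReduced u
  obtain ⟨ωx, hωx, rfl⟩ := cs.exists_isReduced x
  refine ⟨ωu ++ ωx, cs.wordProd_append _ _, ?_, ωx, List.sublist_append_right _ _, rfl⟩
  rw [IsReduced, cs.wordProd_append, hlen, hωu.eq, hωx.eq, List.length_append]

theorem straight_preceq_ux_general {B W : Type*} [Group W] {M : CoxeterMatrix B}
    (cs : CoxeterSystem M W) (σ : MulAut W)
    (hσ : ∀ i : B, ∃ j : B, σ (cs.simple i) = cs.simple j)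
    (WJ : Subgroup W)
    (x : W)
    (hstraight : ∀ n : ℕ, cs.length (twPow σ x n) = n * cs.length x)
    (hJW : ∀ v ∈ WJ, cs.length (v * x) = cs.length v + cs.length x)
    (u : W) (hu : u ∈ WJ) :
    (∀ y : W, (∃ g : W, y = g * x * (σ g)⁻¹) → cs.length x ≤ cs.length y) ∧
    (∃ z : W, ((∃ g : W, z = g * x * (σ g)⁻¹) ∧
        ∀ y : W, (∃ g : W, y = g * x * (σ g)⁻¹) → cs.length z ≤ cs.length y) ∧
      cs.bruhatLE z (u * x)) := by
  have hmin : ∀ y : W, (∃ g : W, y = g * x * (σ g)⁻¹) → cs.length x ≤ cs.length y := by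
    rintro y ⟨g, rfl⟩
    exact CoxeterSystem.length_le_length_conj_of_straight hσ hstraight g
  exact ⟨hmin, x, ⟨⟨1, by simp⟩, hmin⟩, cs.bruhatLE_mul_left_of_length_add (hJW u hu)⟩

/-- If `x` is σ-straight, `x ∈ {}^J W` (so `ℓ(vx) = ℓ(v) + ℓ(x)` for `v ∈ W_J`) and
`u ∈ W_J`, then `x` is of minimal length in its σ-conjugacy class `O_x` and
`O_x ⪯_σ ux`: a minimal length element of `O_x` (namely `x`) is `≤ ux` in Bruhat order. -/
theorem straight_preceq_ux {B W : Type*} [Group W] {M : CoxeterMatrix B}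
    (cs : CoxeterSystem M W) (σ : MulAut W)
    (hσ : ∀ i : B, ∃ j : B, σ (cs.simple i) = cs.simple j)
    (J : Set B) (WJ : Subgroup W)
    (hWJ : WJ = Subgroup.closure (cs.simple '' J))
    (hfin : (WJ : Set W).Finite)
    (x : W)
    (hstraight : ∀ n : ℕ, cs.length (twPow σ x n) = n * cs.length x)
    (hJW : ∀ v ∈ WJ, cs.length (v * x) = cs.length v + cs.length x)
    (u : W) (hu : u ∈ WJ) :
    (∀ y : W, (∃ g : W, y = g * x * (σ g)⁻¹) → cs.length x ≤ cs.length y) ∧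
    (∃ z : W, ((∃ g : W, z = g * x * (σ g)⁻¹) ∧
        ∀ y : W, (∃ g : W, y = g * x * (σ g)⁻¹) → cs.length z ≤ cs.length y) ∧
      cs.bruhatLE z (u * x)) :=
  straight_preceq_ux_general cs σ hσ WJ x hstraight hJW u hu
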